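/- Let K1 and K2 be two minimal X–Y separators of G. Then both Top(K1,K2) and Bottom(K1,K2) are X–Y separators of G; moreover, Bottom(K1,K2) ≥ K1 and Bottom(K1,K2) ≥ K2. -/

import Mathlib

variable {V : Type*}

/-- `K` is an `X`–`Y` separator of `G`: `K` avoids `X ∪ Y` and every walk
from a vertex of `X` to a vertex of `Y` meets `K` (i.e. there is no
`X`–`Y` path in `G \ K`). -/
def IsSeparator (G : SimpleGraph V) (X Y K : Set V) : Prop :=
  K ⊆ (X ∪ Y)ᶜ ∧
  ∀ x ∈ X, ∀ y ∈ Y, ∀ w : G.Walk x y, ∃ v ∈ w.support, v ∈ K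

/-- `NR G A B`: the vertices of `G \ B` that are not reachable from `A` in `G \ B`. -/
def NR (G : SimpleGraph V) (A B : Set V) : Set V :=
  {v | v ∉ B ∧ ¬ ∃ a ∈ A, ∃ w : G.Walk a v, ∀ x ∈ w.support, x ∉ B}

/-- `Reach G A B`: the vertices reachable from `A` in `G \ B`. -/
def Reach (G : SimpleGraph V) (A B : Set V) : Set V :=
  {v | ∃ a ∈ A, ∃ w : G.Walk a v, ∀ x ∈ w.support, x ∉ B}

/-- The order on `X`–`Y` separators: `K1 ≤ K2` iff `NR(G,Y,K1) ⊆ NR(G,Y,K2)`. -/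
def SepLE (G : SimpleGraph V) (Y K1 K2 : Set V) : Prop :=
  NR G Y K1 ⊆ NR G Y K2

/-- The strict order on `X`–`Y` separators. -/
def SepLT (G : SimpleGraph V) (Y K1 K2 : Set V) : Prop :=
  NR G Y K1 ⊆ NR G Y K2 ∧ NR G Y K1 ≠ NR G Y K2

/-- A minimal `X`–`Y` separator: no proper subset is an `X`–`Y` separator. -/
def IsMinimalSeparator (G : SimpleGraph V) (X Y K : Set V) : Prop :=
  IsSeparator G X Y K ∧ ∀ K' ⊂ K, ¬ IsSeparator G X Y K'

/-- An important `X`–`Y` separator: a minimal separator `K` such that there is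
no separator `K'` with `K < K'` and `|K'| ≤ |K|`. -/
def IsImportantSeparator (G : SimpleGraph V) (X Y K : Set V) : Prop :=
  IsMinimalSeparator G X Y K ∧
  ¬ ∃ K', IsSeparator G X Y K' ∧ SepLT G Y K K' ∧ K'.ncard ≤ K.ncard

/-- The minimum size of an `X`–`Y` separator of `G`. -/
noncomputable def minSepSize (G : SimpleGraph V) (X Y : Set V) : ℕ :=
  sInf {n | ∃ K, IsSeparator G X Y K ∧ K.ncard = n}

/-- The excess of a separator: its size minus the minimum separator size. -/
noncomputable def excess (G : SimpleGraph V) (X Y K : Set V) : ℕ :=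
  K.ncard - minSepSize G X Y

/-- The graph `Pr(G,X,Y,K)`: the vertices `NR(G,Y,K) \ X` are deleted (here:
made isolated), and every vertex of `X` is made adjacent to every vertex of `K`. -/
def PrGraph (G : SimpleGraph V) (X Y K : Set V) : SimpleGraph V where
  Adj u v := u ≠ v ∧ u ∉ NR G Y K \ X ∧ v ∉ NR G Y K \ X ∧
    (G.Adj u v ∨ (u ∈ X ∧ v ∈ K) ∨ (u ∈ K ∧ v ∈ X))
  symm := by
    constructor
    rintro u v ⟨h1, h2, h3, h4⟩
    refine ⟨h1.symm, h3, h2, ?_⟩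
    rcases h4 with h | h | h
    · exact Or.inl h.symm
    · exact Or.inr (Or.inr ⟨h.2, h.1⟩)
    · exact Or.inr (Or.inl ⟨h.2, h.1⟩)
  loopless := by constructor; rintro v ⟨h1, -⟩; exact h1 rfl

/-- `NSet G X` is `N(X)`: the set of vertices outside `X` adjacent to a vertex of `X`. -/
def NSet (G : SimpleGraph V) (X : Set V) : Set V :=
  {v | v ∉ X ∧ ∃ x ∈ X, G.Adj x v}

/-- `G` is `X`–`Y` normalized: `N(X)` is an `X`–`Y` separator and is
the unique smallest `X`–`Y` separator. -/
def Normalized (G : SimpleGraph V) (X Y : Set V) : Prop :=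
  IsSeparator G X Y (NSet G X) ∧
  ∀ K, IsSeparator G X Y K → K ≠ NSet G X → (NSet G X).ncard < K.ncard

/-- The cover excess `CE(S)`: the minimum excess of an `X`–`Y` separator disjoint from `S`. -/
noncomputable def CE (G : SimpleGraph V) (X Y S : Set V) : ℕ :=
  sInf {n | ∃ K, IsSeparator G X Y K ∧ Disjoint K S ∧ excess G X Y K = n}

/-- A witness of `S`: an `X`–`Y` separator disjoint from `S` whose excess equals `CE(S)`. -/
noncomputable def IsWitness (G : SimpleGraph V) (X Y S K : Set V) : Prop :=
  IsSeparator G X Y K ∧ Disjoint K S ∧ excess G X Y K = CE G X Y S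

/-- An important witness of `S`: a witness of `S` that is an important `X`–`Y` separator. -/
noncomputable def IsImportantWitness (G : SimpleGraph V) (X Y S K : Set V) : Prop :=
  IsWitness G X Y S K ∧ IsImportantSeparator G X Y K

/-- `Top(K1,K2) = K1^t ∪ K2^t ∪ (K1 ∩ K2)` where `K1^t = K1 ∩ NR(G,Y,K2)` and
`K2^t = K2 ∩ NR(G,Y,K1)`. -/
def TopSet (G : SimpleGraph V) (Y K1 K2 : Set V) : Set V :=
  (K1 ∩ NR G Y K2) ∪ (K2 ∩ NR G Y K1) ∪ (K1 ∩ K2)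

/-- `Bottom(K1,K2) = K1^b ∪ K2^b ∪ (K1 ∩ K2)` where
`K1^b = (K1 \ K1^t) \ (K1 ∩ K2)` and `K2^b = (K2 \ K2^t) \ (K1 ∩ K2)`. -/
def BottomSet (G : SimpleGraph V) (Y K1 K2 : Set V) : Set V :=
  ((K1 \ (K1 ∩ NR G Y K2)) \ (K1 ∩ K2)) ∪
    ((K2 \ (K2 ∩ NR G Y K1)) \ (K1 ∩ K2)) ∪ (K1 ∩ K2)

/-!
Write `R_A(K)` for the vertices reachable from `A` in `G \ K`. A vertex of `K1` lying in `K2` or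
in `R_Y(K2)` belongs to `Bottom(K1,K2)`, and symmetrically; hence `R_Y(K1) ∩ R_Y(K2)` is closed
under steps that avoid `Bottom`, so `R_Y(Bottom) ⊆ R_Y(K1) ∩ R_Y(K2)`. This gives at once that
`Bottom` separates and that `Bottom ≥ K1, K2`. For `Top` the same argument runs from the `X` side:
a vertex of `K1 \ K2` in `R_X(K2)` is not in `R_Y(K2)` because `K2` separates, so it lies in
`NR(G,Y,K2)` and hence in `Top`.
-/

open SimpleGraph

section Reachability

variable {G : SimpleGraph V} {A B : Set V}

theorem mem_NR_iff {v : V} : v ∈ NR G A B ↔ v ∉ B ∧ v ∉ Reach G A B := Iff.rfl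

theorem compl_NR : (NR G A B)ᶜ = B ∪ Reach G A B := by
  ext v
  simp only [Set.mem_compl_iff, mem_NR_iff, Set.mem_union]
  tauto

theorem notMem_of_mem_reach {v : V} (hv : v ∈ Reach G A B) : v ∉ B := by
  obtain ⟨_, _, w, hw⟩ := hv
  exact hw v w.end_mem_support

theorem subset_reach (h : Disjoint A B) : A ⊆ Reach G A B := fun a ha =>
  ⟨a, ha, Walk.nil, fun x hx => by
    rw [Walk.mem_support_nil_iff] at hx
    exact hx ▸ h.notMem_of_mem_left ha⟩

theorem mem_reach_of_adj {u v : V} (hu : u ∈ Reach G A B) (huv : G.Adj u v) (hv : v ∉ B) :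
    v ∈ Reach G A B := by
  obtain ⟨a, ha, w, hw⟩ := hu
  refine ⟨a, ha, w.concat huv, fun x hx => ?_⟩
  rw [Walk.support_concat, List.mem_append, List.mem_singleton] at hx
  rcases hx with hx | rfl
  exacts [hw x hx, hv]

theorem mem_union_reach_of_adj {u v : V} (hu : u ∈ Reach G A B) (huv : G.Adj u v) :
    v ∈ B ∪ Reach G A B := by
  by_cases hv : v ∈ B
  exacts [Or.inl hv, Or.inr (mem_reach_of_adj hu huv hv)]

theorem reach_subset_of_closed {S : Set V} (hA : A ⊆ S)
    (hS : ∀ u v, u ∈ S → G.Adj u v → v ∉ B → v ∈ S) : Reach G A B ⊆ S := by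
  rintro v ⟨a, ha, w, hw⟩
  by_contra hv
  obtain ⟨d, hd, hdS, hdS'⟩ := w.exists_boundary_dart S (hA ha) hv
  exact hdS' (hS _ _ hdS d.adj (hw _ (w.dart_snd_mem_support_of_mem_darts hd)))

/-- `Reach G A K1 ∩ Reach G A K2` is closed under steps avoiding `B`: a step into `K1` would
land in `K1 ∩ (K2 ∪ Reach G A K2)`. -/
theorem reach_subset_inter_reach {K1 K2 : Set V} (hA1 : Disjoint A K1) (hA2 : Disjoint A K2)
    (h1 : K1 ∩ (K2 ∪ Reach G A K2) ⊆ B) (h2 : K2 ∩ (K1 ∪ Reach G A K1) ⊆ B) :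
    Reach G A B ⊆ Reach G A K1 ∩ Reach G A K2 := by
  refine reach_subset_of_closed (Set.subset_inter (subset_reach hA1) (subset_reach hA2)) ?_
  rintro u v ⟨hu1, hu2⟩ huv hvB
  have hv1 := mem_union_reach_of_adj hu1 huv
  have hv2 := mem_union_reach_of_adj hu2 huv
  rcases hv1 with hvK1 | hv1
  · exact absurd (h1 ⟨hvK1, hv2⟩) hvB
  rcases hv2 with hvK2 | hv2
  · exact absurd (h2 ⟨hvK2, Or.inr hv1⟩) hvB
  exact ⟨hv1, hv2⟩

end Reachability

section Separators

variable {G : SimpleGraph V} {X Y K : Set V}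

theorem IsSeparator.symm (h : IsSeparator G X Y K) : IsSeparator G Y X K := by
  refine ⟨Set.union_comm X Y ▸ h.1, fun y hy x hx w => ?_⟩
  obtain ⟨v, hv, hvK⟩ := h.2 x hx y hy w.reverse
  rw [Walk.support_reverse, List.mem_reverse] at hv
  exact ⟨v, hv, hvK⟩

theorem IsSeparator.disjoint_left (h : IsSeparator G X Y K) : Disjoint X K :=
  Set.disjoint_right.mpr fun _ hv hx => h.1 hv (Or.inl hx)

theorem IsSeparator.disjoint_right (h : IsSeparator G X Y K) : Disjoint Y K :=
  h.symm.disjoint_left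

theorem IsSeparator.disjoint_reach (h : IsSeparator G X Y K) :
    Disjoint (Reach G X K) (Reach G Y K) := by
  refine Set.disjoint_left.mpr ?_
  rintro v ⟨x, hx, wx, hwx⟩ ⟨y, hy, wy, hwy⟩
  obtain ⟨z, hz, hzK⟩ := h.2 x hx y hy (wx.append wy.reverse)
  rw [Walk.mem_support_append_iff, Walk.support_reverse, List.mem_reverse] at hz
  rcases hz with hz | hz
  exacts [hwx z hz hzK, hwy z hz hzK]

theorem IsSeparator.reach_subset_NR (h : IsSeparator G X Y K) : Reach G X K ⊆ NR G Y K :=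
  fun _ hv => ⟨notMem_of_mem_reach hv, h.disjoint_reach.notMem_of_mem_left hv⟩

theorem isSeparator_of_disjoint_reach (hK : K ⊆ (X ∪ Y)ᶜ) (h : Disjoint X (Reach G Y K)) :
    IsSeparator G X Y K := by
  refine ⟨hK, fun x hx y hy w => ?_⟩
  by_contra! hw
  refine h.notMem_of_mem_left hx ⟨y, hy, w.reverse, fun v hv => ?_⟩
  rw [Walk.support_reverse, List.mem_reverse] at hv
  exact hw v hv

theorem sepLE_iff {K' : Set V} : SepLE G Y K K' ↔ K' ∪ Reach G Y K' ⊆ K ∪ Reach G Y K := by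
  rw [SepLE, ← Set.compl_subset_compl, compl_NR, compl_NR]

end Separators

section TopBottom

variable {G : SimpleGraph V} {X Y K1 K2 : Set V}

theorem topSet_comm : TopSet G Y K1 K2 = TopSet G Y K2 K1 := by
  ext v
  simp only [TopSet, Set.mem_union, Set.mem_inter_iff]
  tauto

theorem bottomSet_comm : BottomSet G Y K1 K2 = BottomSet G Y K2 K1 := by
  ext v
  simp only [BottomSet, Set.mem_union, Set.mem_sdiff, Set.mem_inter_iff]
  tauto

theorem topSet_subset_union : TopSet G Y K1 K2 ⊆ K1 ∪ K2 := by
  rintro v ((⟨hv, -⟩ | ⟨hv, -⟩) | ⟨hv, -⟩)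
  exacts [Or.inl hv, Or.inr hv, Or.inl hv]

theorem bottomSet_subset_union : BottomSet G Y K1 K2 ⊆ K1 ∪ K2 := by
  rintro v ((⟨⟨hv, -⟩, -⟩ | ⟨⟨hv, -⟩, -⟩) | ⟨hv, -⟩)
  exacts [Or.inl hv, Or.inr hv, Or.inl hv]

theorem inter_union_NR_subset_topSet : K1 ∩ (K2 ∪ NR G Y K2) ⊆ TopSet G Y K1 K2 := by
  rintro v ⟨hv1, hv2 | hv2⟩
  exacts [Or.inr ⟨hv1, hv2⟩, Or.inl (Or.inl ⟨hv1, hv2⟩)]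

theorem inter_union_reach_subset_bottomSet :
    K1 ∩ (K2 ∪ Reach G Y K2) ⊆ BottomSet G Y K1 K2 := by
  rw [← compl_NR]
  rintro v ⟨hv1, hv2⟩
  by_cases hv : v ∈ K2
  · exact Or.inr ⟨hv1, hv⟩
  · exact Or.inl (Or.inl ⟨⟨hv1, fun h => hv2 h.2⟩, fun h => hv h.2⟩)

theorem bottomSet_subset_union_reach : BottomSet G Y K1 K2 ⊆ K1 ∪ Reach G Y K1 := by
  rw [← compl_NR]
  rintro v ((⟨⟨hv, -⟩, -⟩ | ⟨⟨hv2, hv⟩, -⟩) | ⟨hv, -⟩)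
  · exact fun h => h.1 hv
  · exact fun h => hv ⟨hv2, h⟩
  · exact fun h => h.1 hv

theorem reach_topSet_subset (h1 : IsSeparator G X Y K1) (h2 : IsSeparator G X Y K2) :
    Reach G X (TopSet G Y K1 K2) ⊆ Reach G X K1 ∩ Reach G X K2 := by
  refine reach_subset_inter_reach h1.disjoint_left h2.disjoint_left ?_ ?_
  · exact (Set.inter_subset_inter_right _ (Set.union_subset_union_right _
      h2.reach_subset_NR)).trans inter_union_NR_subset_topSet
  · exact topSet_comm (G := G) ▸ (Set.inter_subset_inter_right _
      (Set.union_subset_union_right _ h1.reach_subset_NR)).trans inter_union_NR_subset_topSet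

theorem reach_bottomSet_subset (hY1 : Disjoint Y K1) (hY2 : Disjoint Y K2) :
    Reach G Y (BottomSet G Y K1 K2) ⊆ Reach G Y K1 ∩ Reach G Y K2 :=
  reach_subset_inter_reach hY1 hY2 inter_union_reach_subset_bottomSet
    (bottomSet_comm (G := G) ▸ inter_union_reach_subset_bottomSet)

theorem isSeparator_topSet (h1 : IsSeparator G X Y K1) (h2 : IsSeparator G X Y K2) :
    IsSeparator G X Y (TopSet G Y K1 K2) := by
  refine IsSeparator.symm (isSeparator_of_disjoint_reach ?_ ?_)
  · exact Set.union_comm X Y ▸ topSet_subset_union.trans (Set.union_subset h1.1 h2.1)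
  · refine Set.disjoint_of_subset_right ((reach_topSet_subset h1 h2).trans
      Set.inter_subset_left) ?_
    exact h1.disjoint_reach.symm.mono_left (subset_reach h1.disjoint_right)

theorem isSeparator_bottomSet (h1 : IsSeparator G X Y K1) (h2 : IsSeparator G X Y K2) :
    IsSeparator G X Y (BottomSet G Y K1 K2) := by
  refine isSeparator_of_disjoint_reach
    (bottomSet_subset_union.trans (Set.union_subset h1.1 h2.1)) ?_
  refine Set.disjoint_of_subset_right ((reach_bottomSet_subset h1.disjoint_right
    h2.disjoint_right).trans Set.inter_subset_left) ?_
  exact h1.disjoint_reach.mono_left (subset_reach h1.disjoint_left)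

theorem sepLE_bottomSet (hY1 : Disjoint Y K1) (hY2 : Disjoint Y K2) :
    SepLE G Y K1 (BottomSet G Y K1 K2) :=
  sepLE_iff.mpr <| Set.union_subset bottomSet_subset_union_reach <|
    (reach_bottomSet_subset hY1 hY2).trans (Set.inter_subset_left.trans Set.subset_union_right)

end TopBottom

theorem top_bottom_separator_general
    {V : Type*} (G : SimpleGraph V) (X Y K1 K2 : Set V)
    (hK1 : IsMinimalSeparator G X Y K1) (hK2 : IsMinimalSeparator G X Y K2) :
    IsSeparator G X Y (TopSet G Y K1 K2) ∧
    IsSeparator G X Y (BottomSet G Y K1 K2) ∧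
    SepLE G Y K1 (BottomSet G Y K1 K2) ∧
    SepLE G Y K2 (BottomSet G Y K1 K2) := by
  obtain ⟨h1, -⟩ := hK1
  obtain ⟨h2, -⟩ := hK2
  refine ⟨isSeparator_topSet h1 h2, isSeparator_bottomSet h1 h2,
    sepLE_bottomSet h1.disjoint_right h2.disjoint_right, ?_⟩
  rw [bottomSet_comm]
  exact sepLE_bottomSet h2.disjoint_right h1.disjoint_right

/-- Let `K1`, `K2` be two minimal `X`–`Y` separators of `G`.
Then both `Top(K1,K2)` and `Bottom(K1,K2)` are `X`–`Y` separators; moreover,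
`Bottom(K1,K2) ≥ K1` and `Bottom(K1,K2) ≥ K2`. -/
theorem top_bottom_separator
    {V : Type*} [Fintype V] (G : SimpleGraph V) (X Y K1 K2 : Set V)
    (hXY : Disjoint X Y)
    (hK1 : IsMinimalSeparator G X Y K1) (hK2 : IsMinimalSeparator G X Y K2) :
    IsSeparator G X Y (TopSet G Y K1 K2) ∧
    IsSeparator G X Y (BottomSet G Y K1 K2) ∧
    SepLE G Y K1 (BottomSet G Y K1 K2) ∧
    SepLE G Y K2 (BottomSet G Y K1 K2) :=
  top_bottom_separator_general G X Y K1 K2 hK1 hK2
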